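/- arXiv:2412.15043 — 4 statements merged into one kernel-verified Lean document; each statement's English description precedes it below -/
import Mathlib

section
/- If f : [0,1] → ℝ is Hölder continuous with exponent 1/2 and constant L (i.e. |f(x)-f(y)| ≤ L|x-y|^{1/2}), and f_m is the truncation of the Haar expansion of f at level m (i.e. f_m = c_0(f)h_0 + Σ_{k=0}^{m-1} Σ_{j=1}^{2^k} c_{k,j}(f) h_{k,j}), then sup_{t ∈ [0,1]} |f(t) - f_m(t)| ≤ L 2^{-m/2}. -/
open MeasureTheory

/-- Dyadic interval `Δ_{k,j}`: `[0, 2^{-k}]` for `j = 1`, `((j-1)2^{-k}, j·2^{-k}]` for `j ≥ 2`. -/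
noncomputable def haarDyad (k j : ℕ) : Set ℝ :=
  if j = 1 then Set.Icc 0 (2 ^ (-(k : ℝ)))
  else Set.Ioc (((j : ℝ) - 1) * 2 ^ (-(k : ℝ))) ((j : ℝ) * 2 ^ (-(k : ℝ)))

/-- Haar function `h_{k,j} = 2^{k/2} (1(Δ_{k+1,2j-1}) - 1(Δ_{k+1,2j}))`. -/
noncomputable def haarFn (k j : ℕ) (u : ℝ) : ℝ :=
  2 ^ ((k : ℝ) / 2) *
    ((haarDyad (k + 1) (2 * j - 1)).indicator (fun _ => (1 : ℝ)) u -
      (haarDyad (k + 1) (2 * j)).indicator (fun _ => (1 : ℝ)) u)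

/-- Fourier–Haar coefficient `c_{k,j}(f) = ∫₀¹ f(u) h_{k,j}(u) du`. -/
noncomputable def haarCoeff (f : ℝ → ℝ) (k j : ℕ) : ℝ :=
  ∫ u in (0 : ℝ)..1, f u * haarFn k j u

/-- Truncated Haar expansion `f_m = c₀(f)h₀ + Σ_{k<m} Σ_{j=1}^{2^k} c_{k,j}(f) h_{k,j}`,
where `h₀` is the indicator of `[0,1]` and `c₀(f) = ∫₀¹ f`. -/
noncomputable def partialHaar (f : ℝ → ℝ) (m : ℕ) (t : ℝ) : ℝ :=
  (∫ u in (0 : ℝ)..1, f u) * (Set.Icc (0 : ℝ) 1).indicator (fun _ => (1 : ℝ)) t +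
    ∑ k ∈ Finset.range m, ∑ j ∈ Finset.Icc 1 (2 ^ k), haarCoeff f k j * haarFn k j t

/-! On a dyadic interval `Δ_{m,i}` the partial sum `f_m` equals the average of `f` over
`Δ_{m,i}`: by induction on `m`, adding the level-`m` term `c_{m,j} h_{m,j}` turns the average
over the parent interval `Δ_{m,j} = Δ_{m+1,2j-1} ∪ Δ_{m+1,2j}` into the average over the half
containing `t`. As `Δ_{m,i}` has length `2^{-m}`, the Hölder bound puts every value of `f` on it,
and hence their average, within `L 2^{-m/2}` of `f t`. -/

open Set

lemma two_rpow_neg_natCast (k : ℕ) : (2 : ℝ) ^ (-(k : ℝ)) = ((2 : ℝ) ^ k)⁻¹ := by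
  rw [Real.rpow_neg zero_le_two, Real.rpow_natCast]

lemma haarDyad_zero_one : haarDyad 0 1 = Icc 0 1 := by
  simp [haarDyad]

lemma measurableSet_haarDyad (k i : ℕ) : MeasurableSet (haarDyad k i) := by
  unfold haarDyad; split_ifs
  exacts [measurableSet_Icc, measurableSet_Ioc]

lemma haarDyad_subset_Icc (k i : ℕ) :
    haarDyad k i ⊆ Icc ((i - 1) * 2 ^ (-(k : ℝ))) (i * 2 ^ (-(k : ℝ))) := by
  unfold haarDyad
  split_ifs with h
  · simp [h]
  · exact Ioc_subset_Icc_self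

lemma haarDyad_subset_unitInterval {k i : ℕ} (hi : 1 ≤ i) (hik : i ≤ 2 ^ k) :
    haarDyad k i ⊆ Icc 0 1 := by
  refine (haarDyad_subset_Icc k i).trans (Icc_subset_Icc ?_ ?_)
  · have : (1 : ℝ) ≤ i := by exact_mod_cast hi
    have : (0 : ℝ) < 2 ^ (-(k : ℝ)) := by positivity
    nlinarith
  · rw [two_rpow_neg_natCast, ← div_eq_mul_inv, div_le_one (by positivity)]
    exact_mod_cast hik

lemma volume_haarDyad (k i : ℕ) :
    volume (haarDyad k i) = ENNReal.ofReal (2 ^ (-(k : ℝ))) := by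
  unfold haarDyad
  split_ifs <;> simp only [Real.volume_Icc, Real.volume_Ioc] <;> ring_nf

lemma disjoint_haarDyad {k a b : ℕ} (ha : 1 ≤ a) (hab : a < b) :
    Disjoint (haarDyad k a) (haarDyad k b) := by
  rw [Set.disjoint_left]
  intro t hta htb
  have hta := (haarDyad_subset_Icc k a hta).2
  simp only [haarDyad, if_neg (show b ≠ 1 by omega), mem_Ioc] at htb
  have : (a : ℝ) ≤ b - 1 := by
    rw [le_sub_iff_add_le]; exact_mod_cast hab
  have hδ : (0 : ℝ) < 2 ^ (-(k : ℝ)) := by positivity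
  nlinarith [htb.1]

lemma disjoint_haarDyad_of_ne {k a b : ℕ} (ha : 1 ≤ a) (hb : 1 ≤ b) (hab : a ≠ b) :
    Disjoint (haarDyad k a) (haarDyad k b) := by
  rcases hab.lt_or_gt with h | h
  exacts [disjoint_haarDyad ha h, (disjoint_haarDyad hb h).symm]

lemma haarDyad_union_succ {k j : ℕ} (hj : 1 ≤ j) :
    haarDyad (k + 1) (2 * j - 1) ∪ haarDyad (k + 1) (2 * j) = haarDyad k j := by
  have hδ : (2 : ℝ) ^ (-(k : ℝ)) = 2 * 2 ^ (-((k + 1 : ℕ) : ℝ)) := by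
    rw [two_rpow_neg_natCast, two_rpow_neg_natCast, pow_succ]; field_simp
  have hpos : (0 : ℝ) < 2 ^ (-((k + 1 : ℕ) : ℝ)) := by positivity
  unfold haarDyad
  rw [hδ, if_neg (show 2 * j ≠ 1 by omega)]
  generalize (2 : ℝ) ^ (-((k + 1 : ℕ) : ℝ)) = δ at hpos ⊢
  obtain rfl | hj2 := hj.eq_or_lt
  · norm_num
    exact Icc_union_Ioc_eq_Icc hpos.le (by linarith)
  · have hj2' : (2 : ℝ) ≤ j := by exact_mod_cast hj2
    rw [if_neg (show 2 * j - 1 ≠ 1 by omega), if_neg (show j ≠ 1 by omega),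
      Nat.cast_sub (by omega)]
    push_cast
    rw [Ioc_union_Ioc_eq_Ioc (by nlinarith) (by nlinarith)]
    congr 1 <;> ring

lemma exists_mem_haarDyad (k : ℕ) {t : ℝ} (ht : t ∈ Icc (0 : ℝ) 1) :
    ∃ i, 1 ≤ i ∧ i ≤ 2 ^ k ∧ t ∈ haarDyad k i := by
  induction k with
  | zero => exact ⟨1, le_rfl, le_rfl, haarDyad_zero_one ▸ ht⟩
  | succ k ih =>
    obtain ⟨j, hj, hjk, htj⟩ := ih
    rw [← haarDyad_union_succ hj] at htj
    rw [pow_succ]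
    rcases htj with h | h
    exacts [⟨2 * j - 1, by omega, by omega, h⟩, ⟨2 * j, by omega, by omega, h⟩]

lemma abs_sub_le_of_mem_haarDyad {k i : ℕ} {t u : ℝ}
    (ht : t ∈ haarDyad k i) (hu : u ∈ haarDyad k i) : |t - u| ≤ 2 ^ (-(k : ℝ)) := by
  have ht := haarDyad_subset_Icc k i ht
  have hu := haarDyad_subset_Icc k i hu
  rw [abs_sub_le_iff]
  constructor <;> nlinarith [ht.1, ht.2, hu.1, hu.2]

section HaarExpansion

lemma haarFn_eq_zero_of_notMem {k j : ℕ} (hj : 1 ≤ j) {t : ℝ} (ht : t ∉ haarDyad k j) :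
    haarFn k j t = 0 := by
  rw [← haarDyad_union_succ hj, mem_union, not_or] at ht
  simp [haarFn, ht.1, ht.2]

lemma haarFn_of_mem_left {k j : ℕ} (hj : 1 ≤ j) {t : ℝ} (ht : t ∈ haarDyad (k + 1) (2 * j - 1)) :
    haarFn k j t = 2 ^ ((k : ℝ) / 2) := by
  have ht' := (disjoint_haarDyad (k := k + 1) (show 1 ≤ 2 * j - 1 by omega)
    (show 2 * j - 1 < 2 * j by omega)).notMem_of_mem_left ht
  simp [haarFn, ht, ht']

lemma haarFn_of_mem_right {k j : ℕ} (hj : 1 ≤ j) {t : ℝ} (ht : t ∈ haarDyad (k + 1) (2 * j)) :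
    haarFn k j t = -2 ^ ((k : ℝ) / 2) := by
  have ht' := (disjoint_haarDyad (k := k + 1) (show 1 ≤ 2 * j - 1 by omega)
    (show 2 * j - 1 < 2 * j by omega)).notMem_of_mem_right ht
  simp [haarFn, ht, ht']

lemma intervalIntegral_indicator_of_subset {f : ℝ → ℝ} {s : Set ℝ} {a b : ℝ} (hab : a ≤ b)
    (hs : MeasurableSet s) (hsab : s ⊆ Icc a b) :
    ∫ u in a..b, s.indicator f u = ∫ u in s, f u := by
  rw [intervalIntegral.integral_of_le hab, ← integral_Icc_eq_integral_Ioc,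
    setIntegral_indicator hs, inter_eq_right.mpr hsab]

variable {f : ℝ → ℝ}

lemma haarCoeff_eq_sub (hf : IntegrableOn f (Icc 0 1)) {k j : ℕ} (hj : 1 ≤ j) (hjk : j ≤ 2 ^ k) :
    haarCoeff f k j = 2 ^ ((k : ℝ) / 2) *
      ((∫ u in haarDyad (k + 1) (2 * j - 1), f u) - ∫ u in haarDyad (k + 1) (2 * j), f u) := by
  have hint (i : ℕ) : IntervalIntegrable ((haarDyad (k + 1) i).indicator f) volume 0 1 :=
    (intervalIntegrable_iff_integrableOn_Icc_of_le zero_le_one).mpr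
      (hf.indicator (measurableSet_haarDyad _ _))
  have hind (i : ℕ) (hi : 1 ≤ i) (hik : i ≤ 2 ^ (k + 1)) :
      ∫ u in (0 : ℝ)..1, (haarDyad (k + 1) i).indicator f u = ∫ u in haarDyad (k + 1) i, f u :=
    intervalIntegral_indicator_of_subset zero_le_one (measurableSet_haarDyad _ _)
      (haarDyad_subset_unitInterval hi hik)
  have hpt : (fun u => f u * haarFn k j u) = fun u => 2 ^ ((k : ℝ) / 2) *
      ((haarDyad (k + 1) (2 * j - 1)).indicator f u -
        (haarDyad (k + 1) (2 * j)).indicator f u) := by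
    ext u
    classical
    simp only [haarFn, indicator_apply]
    split_ifs <;> ring
  have h1 : 1 ≤ 2 * j - 1 := by omega
  have h2 : 2 * j ≤ 2 ^ (k + 1) := by rw [pow_succ]; omega
  rw [haarCoeff, hpt, intervalIntegral.integral_const_mul,
    intervalIntegral.integral_sub (hint _) (hint _), hind _ h1 (by omega), hind _ (by omega) h2]

lemma setIntegral_haarDyad_eq_add (hf : IntegrableOn f (Icc 0 1)) {k j : ℕ} (hj : 1 ≤ j)
    (hjk : j ≤ 2 ^ k) :
    ∫ u in haarDyad k j, f u =
      (∫ u in haarDyad (k + 1) (2 * j - 1), f u) + ∫ u in haarDyad (k + 1) (2 * j), f u := by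
  have h2 : 2 * j ≤ 2 ^ (k + 1) := by rw [pow_succ]; omega
  rw [← haarDyad_union_succ hj]
  exact setIntegral_union (disjoint_haarDyad (by omega) (by omega)) (measurableSet_haarDyad _ _)
    (hf.mono_set (haarDyad_subset_unitInterval (by omega) (by omega)))
    (hf.mono_set (haarDyad_subset_unitInterval (by omega) h2))

lemma partialHaar_succ (m : ℕ) (t : ℝ) :
    partialHaar f (m + 1) t =
      partialHaar f m t + ∑ j ∈ Finset.Icc 1 (2 ^ m), haarCoeff f m j * haarFn m j t := by
  simp only [partialHaar, Finset.sum_range_succ, add_assoc]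

lemma sum_haarCoeff_mul_haarFn_of_mem {m j : ℕ} (hj : 1 ≤ j) (hjm : j ≤ 2 ^ m) {t : ℝ}
    (ht : t ∈ haarDyad m j) :
    ∑ j' ∈ Finset.Icc 1 (2 ^ m), haarCoeff f m j' * haarFn m j' t =
      haarCoeff f m j * haarFn m j t :=
  Finset.sum_eq_single_of_mem j (Finset.mem_Icc.mpr ⟨hj, hjm⟩) fun j' hj' hne => by
    have hj' := (Finset.mem_Icc.mp hj').1
    have ht' := (disjoint_haarDyad_of_ne hj hj' hne.symm).notMem_of_mem_left ht
    rw [haarFn_eq_zero_of_notMem hj' ht', mul_zero]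

theorem partialHaar_eq_pow_mul_setIntegral (hf : IntegrableOn f (Icc 0 1)) (m : ℕ) {i : ℕ}
    (hi : 1 ≤ i) (him : i ≤ 2 ^ m) {t : ℝ} (ht : t ∈ haarDyad m i) :
    partialHaar f m t = 2 ^ m * ∫ u in haarDyad m i, f u := by
  induction m generalizing i with
  | zero =>
    obtain rfl : i = 1 := by simp at him; omega
    rw [haarDyad_zero_one] at ht ⊢
    simp [partialHaar, ht, integral_Icc_eq_integral_Ioc, intervalIntegral.integral_of_le]
  | succ m ih =>
    obtain ⟨j, hj, hjm, hij⟩ : ∃ j, 1 ≤ j ∧ j ≤ 2 ^ m ∧ (i = 2 * j - 1 ∨ i = 2 * j) :=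
      ⟨(i + 1) / 2, by omega, by rw [pow_succ] at him; omega, by omega⟩
    have htj : t ∈ haarDyad m j := by
      rw [← haarDyad_union_succ hj]
      rcases hij with rfl | rfl
      exacts [Or.inl ht, Or.inr ht]
    have hsq : (2 : ℝ) ^ ((m : ℝ) / 2) * 2 ^ ((m : ℝ) / 2) = 2 ^ m := by
      rw [← Real.rpow_add zero_lt_two, add_halves, Real.rpow_natCast]
    rw [partialHaar_succ, ih hj hjm htj, sum_haarCoeff_mul_haarFn_of_mem hj hjm htj,
      haarCoeff_eq_sub hf hj hjm, setIntegral_haarDyad_eq_add hf hj hjm]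
    rcases hij with rfl | rfl
    · rw [haarFn_of_mem_left hj ht]
      linear_combination ((∫ u in haarDyad (m + 1) (2 * j - 1), f u) -
        ∫ u in haarDyad (m + 1) (2 * j), f u) * hsq
    · rw [haarFn_of_mem_right hj ht]
      linear_combination ((∫ u in haarDyad (m + 1) (2 * j), f u) -
        ∫ u in haarDyad (m + 1) (2 * j - 1), f u) * hsq

theorem partialHaar_eq_setAverage (hf : IntegrableOn f (Icc 0 1)) (m : ℕ) {i : ℕ}
    (hi : 1 ≤ i) (him : i ≤ 2 ^ m) {t : ℝ} (ht : t ∈ haarDyad m i) :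
    partialHaar f m t = ⨍ u in haarDyad m i, f u := by
  rw [partialHaar_eq_pow_mul_setIntegral hf m hi him ht, setAverage_eq, measureReal_def,
    volume_haarDyad, ENNReal.toReal_ofReal (by positivity), two_rpow_neg_natCast, inv_inv,
    smul_eq_mul]

end HaarExpansion

lemma norm_sub_setAverage_le {α E : Type*} [MeasurableSpace α] [NormedAddCommGroup E]
    [NormedSpace ℝ E] [CompleteSpace E] {μ : Measure α} {s : Set α} {f : α → E} {c : E} {C : ℝ}
    (hs₀ : μ s ≠ 0) (hs : μ s ≠ ⊤) (hf : IntegrableOn f s μ) (hC : ∀ u ∈ s, ‖c - f u‖ ≤ C) :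
    ‖c - ⨍ u in s, f u ∂μ‖ ≤ C := by
  have hpos : 0 < μ.real s := ENNReal.toReal_pos hs₀ hs
  have hint : ‖∫ u in s, (c - f u) ∂μ‖ ≤ C * μ.real s :=
    norm_setIntegral_le_of_norm_le_const hs.lt_top hC
  conv_lhs => rw [← setAverage_const hs₀ hs c]
  rw [setAverage_eq, setAverage_eq, ← smul_sub, ← integral_sub (integrableOn_const (C := c) hs) hf,
    norm_smul, norm_inv, Real.norm_of_nonneg hpos.le, inv_mul_le_iff₀ hpos, mul_comm]
  exact hint

lemma continuousOn_of_abs_sub_le_mul_rpow {f : ℝ → ℝ} {s : Set ℝ} {L r : ℝ} (hr : 0 < r)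
    (hf : ∀ x ∈ s, ∀ y ∈ s, |f x - f y| ≤ L * |x - y| ^ r) : ContinuousOn f s := by
  intro x hx
  rw [ContinuousWithinAt, tendsto_iff_norm_sub_tendsto_zero]
  refine squeeze_zero' (Filter.Eventually.of_forall fun _ => norm_nonneg _)
    (eventually_nhdsWithin_of_forall fun y hy => hf y hy x hx) ?_
  have hlim : Filter.Tendsto (fun y => L * |y - x| ^ r) (nhdsWithin x s) (nhds (L * |x - x| ^ r)) :=
    ((((continuous_id.sub continuous_const).abs).rpow_const fun _ => Or.inr hr.le).const_mul L
      |>.tendsto x).mono_left nhdsWithin_le_nhds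
  simpa [Real.zero_rpow hr.ne'] using hlim

theorem stmt1_general (L : ℝ) (f : ℝ → ℝ)
    (hf : ∀ x ∈ Set.Icc (0 : ℝ) 1, ∀ y ∈ Set.Icc (0 : ℝ) 1,
      |f x - f y| ≤ L * |x - y| ^ ((1 : ℝ) / 2))
    (m : ℕ) :
    ∀ t ∈ Set.Icc (0 : ℝ) 1, |f t - partialHaar f m t| ≤ L * 2 ^ (-(m : ℝ) / 2) := by
  intro t ht
  have hL : 0 ≤ L := by
    simpa using (abs_nonneg _).trans
      (hf 0 (left_mem_Icc.mpr zero_le_one) 1 (right_mem_Icc.mpr zero_le_one))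
  have hfi : IntegrableOn f (Icc 0 1) :=
    (continuousOn_of_abs_sub_le_mul_rpow one_half_pos hf).integrableOn_Icc
  obtain ⟨i, hi, him, hti⟩ := exists_mem_haarDyad m ht
  have hsub := haarDyad_subset_unitInterval hi him
  rw [partialHaar_eq_setAverage hfi m hi him hti, ← Real.norm_eq_abs]
  refine norm_sub_setAverage_le (by simp [volume_haarDyad]) (by simp [volume_haarDyad])
    (hfi.mono_set hsub) fun u hu => ?_
  calc ‖f t - f u‖ ≤ L * |t - u| ^ ((1 : ℝ) / 2) := hf t ht u (hsub hu)
    _ ≤ L * (2 ^ (-(m : ℝ))) ^ ((1 : ℝ) / 2) := by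
      gcongr; exact abs_sub_le_of_mem_haarDyad hti hu
    _ = L * 2 ^ (-(m : ℝ) / 2) := by
      rw [← Real.rpow_mul zero_le_two, mul_one_div]

/-- If `f` is Hölder-`1/2` with constant `L` on `[0,1]`, then the truncated Haar expansion
at level `m` satisfies `sup_{t∈[0,1]} |f(t) - f_m(t)| ≤ L 2^{-m/2}`. -/
theorem stmt1 (L : ℝ) (hL : 0 < L) (f : ℝ → ℝ)
    (hf : ∀ x ∈ Set.Icc (0 : ℝ) 1, ∀ y ∈ Set.Icc (0 : ℝ) 1,
      |f x - f y| ≤ L * |x - y| ^ ((1 : ℝ) / 2))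
    (m : ℕ) :
    ∀ t ∈ Set.Icc (0 : ℝ) 1, |f t - partialHaar f m t| ≤ L * 2 ^ (-(m : ℝ) / 2) :=
  stmt1_general L f hf m
end

section
/- Let ξ be a real-valued random variable with E ξ = 0 and 0 < E ξ² < ∞, satisfying Sakhanenko's condition λ E[|ξ|³ exp(λ|ξ|)] ≤ E ξ² for some λ > 0. Then for all t with |t| ≤ λ/3, E exp(tξ) ≤ exp(t² E ξ²). -/
/-!
Taylor's formula with Lagrange remainder gives the pointwise bound
`exp x ≤ 1 + x + x²/2 + |x|³ exp |x| / 6`. Taking expectations at `x = tξ` and using `E ξ = 0`,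
`E exp(tξ) ≤ 1 + t² E ξ² / 2 + |t|³ E[|ξ|³ exp(λ|ξ|)] / 6`, and for `|t| ≤ λ/3` Sakhanenko's
condition bounds the cubic term by `t² E ξ² / 18`, so the total is at most
`1 + t² E ξ² ≤ exp(t² E ξ²)`.
-/

open MeasureTheory ProbabilityTheory Real Set

lemma Real.exp_le_quadratic_add_abs_cube (x : ℝ) :
    exp x ≤ 1 + x + x ^ 2 / 2 + |x| ^ 3 * exp |x| / 6 := by
  rcases eq_or_ne x 0 with rfl | hx
  · simp
  have hderiv (n : ℕ) : iteratedDeriv n exp = exp := by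
    simpa using iteratedDeriv_exp_const_mul n 1
  obtain ⟨c, hc, hrem⟩ := taylor_mean_remainder_lagrange_iteratedDeriv (f := exp) (n := 2)
    hx.symm contDiff_exp.contDiffOn
  have hpoly : taylorWithinEval exp 2 (uIcc 0 x) 0 x = 1 + x + x ^ 2 / 2 := by
    rw [taylor_within_apply]
    simp [Finset.sum_range_succ, hderiv, iteratedDerivWithin_eq_iteratedDeriv
      (uniqueDiffOn_uIcc hx.symm) contDiff_exp.contDiffAt left_mem_uIcc]
    ring
  have hc_le : c ≤ |x| := hc.2.le.trans (max_le (abs_nonneg x) (le_abs_self x))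
  have hcube : exp c * x ^ 3 ≤ exp |x| * |x| ^ 3 :=
    calc exp c * x ^ 3 ≤ exp c * |x| ^ 3 :=
          mul_le_mul_of_nonneg_left ((le_abs_self _).trans (abs_pow x 3).le) (exp_pos c).le
      _ ≤ exp |x| * |x| ^ 3 := by gcongr
  rw [hpoly, hderiv, sub_zero] at hrem
  norm_num [Nat.factorial] at hrem
  nlinarith

lemma Real.exp_mul_le_quadratic_add_abs_cube {t l : ℝ} (ht : |t| ≤ l) (y : ℝ) :
    exp (t * y) ≤ 1 + t * y + t ^ 2 / 2 * y ^ 2 + |t| ^ 3 / 6 * (|y| ^ 3 * exp (l * |y|)) := by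
  have hexp : exp |t * y| ≤ exp (l * |y|) := by
    rw [abs_mul]; gcongr
  calc exp (t * y) ≤ 1 + t * y + (t * y) ^ 2 / 2 + |t * y| ^ 3 * exp |t * y| / 6 :=
        exp_le_quadratic_add_abs_cube _
    _ ≤ 1 + t * y + (t * y) ^ 2 / 2 + |t * y| ^ 3 * exp (l * |y|) / 6 := by gcongr
    _ = 1 + t * y + t ^ 2 / 2 * y ^ 2 + |t| ^ 3 / 6 * (|y| ^ 3 * exp (l * |y|)) := by
        rw [abs_mul]; ring

namespace ProbabilityTheory

variable {Ω : Type*} [MeasurableSpace Ω] {μ : Measure Ω} [IsProbabilityMeasure μ] {ξ : Ω → ℝ}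
  {t l : ℝ}

lemma mgf_le_one_add_sq_add_abs_cube (hξ : Integrable ξ μ) (hmean : μ[ξ] = 0)
    (hsq : Integrable (fun ω => ξ ω ^ 2) μ)
    (hcube : Integrable (fun ω => |ξ ω| ^ 3 * exp (l * |ξ ω|)) μ) (ht : |t| ≤ l) :
    mgf ξ μ t ≤ 1 + t ^ 2 / 2 * μ[fun ω => ξ ω ^ 2]
      + |t| ^ 3 / 6 * μ[fun ω => |ξ ω| ^ 3 * exp (l * |ξ ω|)] := by
  have hlin : Integrable (fun ω => 1 + t * ξ ω) μ := (integrable_const 1).add (hξ.const_mul t)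
  have hquad : Integrable (fun ω => 1 + t * ξ ω + t ^ 2 / 2 * ξ ω ^ 2) μ :=
    hlin.add (hsq.const_mul _)
  calc mgf ξ μ t
      ≤ ∫ ω, (1 + t * ξ ω + t ^ 2 / 2 * ξ ω ^ 2
          + |t| ^ 3 / 6 * (|ξ ω| ^ 3 * exp (l * |ξ ω|))) ∂μ :=
        integral_mono_of_nonneg (ae_of_all _ fun ω => (exp_pos _).le)
          (hquad.add (hcube.const_mul _))
          (ae_of_all _ fun ω => exp_mul_le_quadratic_add_abs_cube ht (ξ ω))
    _ = _ := by
        rw [integral_add hquad (hcube.const_mul _), integral_add hlin (hsq.const_mul _),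
          integral_add (integrable_const 1) (hξ.const_mul t)]
        simp [integral_const_mul, hmean]

end ProbabilityTheory

theorem stmt3_general {Ω : Type*} [MeasurableSpace Ω] (μ : Measure Ω) [IsProbabilityMeasure μ]
    (ξ : Ω → ℝ) (hmeas : Measurable ξ) (l : ℝ)
    (hmean : ∫ ω, ξ ω ∂μ = 0)
    (hvar_int : Integrable (fun ω => (ξ ω) ^ 2) μ)
    (hsak_int : Integrable (fun ω => |ξ ω| ^ 3 * Real.exp (l * |ξ ω|)) μ)
    (hsak : l * ∫ ω, |ξ ω| ^ 3 * Real.exp (l * |ξ ω|) ∂μ ≤ ∫ ω, (ξ ω) ^ 2 ∂μ) :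
    ∀ t : ℝ, |t| ≤ l / 3 →
      ∫ ω, Real.exp (t * ξ ω) ∂μ ≤ Real.exp (t ^ 2 * ∫ ω, (ξ ω) ^ 2 ∂μ) := by
  intro t ht
  set C := ∫ ω, ξ ω ^ 2 ∂μ
  set S := ∫ ω, |ξ ω| ^ 3 * exp (l * |ξ ω|) ∂μ
  have hξ : Integrable ξ μ :=
    ((memLp_two_iff_integrable_sq hmeas.aestronglyMeasurable).2 hvar_int).integrable one_le_two
  have hC : 0 ≤ C := integral_nonneg fun ω => sq_nonneg _
  have hS : 0 ≤ S := integral_nonneg fun ω => by positivity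
  have hcube : |t| ^ 3 * S ≤ t ^ 2 * C / 3 :=
    calc |t| ^ 3 * S = t ^ 2 * (|t| * S) := by rw [← sq_abs t]; ring
      _ ≤ t ^ 2 * (l / 3 * S) := by gcongr
      _ ≤ t ^ 2 * C / 3 := by nlinarith [sq_nonneg t]
  calc ∫ ω, exp (t * ξ ω) ∂μ ≤ 1 + t ^ 2 / 2 * C + |t| ^ 3 / 6 * S :=
        mgf_le_one_add_sq_add_abs_cube hξ hmean hvar_int hsak_int
          (ht.trans (by linarith [(abs_nonneg t).trans ht]))
    _ ≤ t ^ 2 * C + 1 := by nlinarith [mul_nonneg (sq_nonneg t) hC]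
    _ ≤ exp (t ^ 2 * C) := add_one_le_exp _

/-- Sakhanenko MGF bound: if `E ξ = 0`, `0 < E ξ² < ∞` and
`λ E[|ξ|³ exp(λ|ξ|)] ≤ E ξ²`, then `E exp(tξ) ≤ exp(t² E ξ²)` for `|t| ≤ λ/3`. -/
theorem stmt3 {Ω : Type*} [MeasurableSpace Ω] (μ : Measure Ω) [IsProbabilityMeasure μ]
    (ξ : Ω → ℝ) (hmeas : Measurable ξ) (l : ℝ) (hl : 0 < l)
    (hmean : ∫ ω, ξ ω ∂μ = 0)
    (hvar_int : Integrable (fun ω => (ξ ω) ^ 2) μ)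
    (hvar_pos : 0 < ∫ ω, (ξ ω) ^ 2 ∂μ)
    (hsak_int : Integrable (fun ω => |ξ ω| ^ 3 * Real.exp (l * |ξ ω|)) μ)
    (hsak : l * ∫ ω, |ξ ω| ^ 3 * Real.exp (l * |ξ ω|) ∂μ ≤ ∫ ω, (ξ ω) ^ 2 ∂μ) :
    ∀ t : ℝ, |t| ≤ l / 3 →
      ∫ ω, Real.exp (t * ξ ω) ∂μ ≤ Real.exp (t ^ 2 * ∫ ω, (ξ ω) ^ 2 ∂μ) :=
  stmt3_general μ ξ hmeas l hmean hvar_int hsak_int hsak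
end

section
/- Let ξ₁,...,ξₙ be independent real random variables with E ξᵢ = 0, 0 < E ξᵢ² < ∞, and λ E[|ξᵢ|³ exp(λ|ξᵢ|)] ≤ E ξᵢ² for all i, where λ > 0. Set Sₙ = ξ₁+...+ξₙ, Bₙ² = E Sₙ², and Sₙ* = Sₙ · 1(|Sₙ| ≤ Bₙ²). Then E exp(c₁ (Sₙ*/Bₙ)²) ≤ 1 + 2/c₁, where c₁ = (1/4) min(λ/3, 1/2). -/
/-!
Under Sakhanenko's condition a third-order Taylor bound for `exp` gives the sub-Gaussian
estimate `E exp(t ξᵢ) ≤ exp(t² E ξᵢ²)` for `|t| ≤ λ/3`, and independence multiplies these into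
`E exp(t Sₙ) ≤ exp(t² Bₙ²)`. A Chernoff bound with `t = 4 c₁ x / Bₙ²`, admissible exactly for
`x ≤ Bₙ²`, gives `P(|Sₙ| ≥ x) ≤ 2 exp(-2 c₁ x² / Bₙ²)` on that range; the truncation at `Bₙ²`
makes this a tail bound `P((Sₙ*/Bₙ)² ≥ t) ≤ 2 exp(-2 c₁ t)` for every `t > 0`, and the layer-cake
formula turns it into `E exp(c₁ (Sₙ*/Bₙ)²) ≤ 1 + 2 ≤ 1 + 2/c₁`.
-/

open MeasureTheory ProbabilityTheory Real

lemma Real.exp_le_one_add_add_sq_div_two_add (y : ℝ) :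
    exp y ≤ 1 + y + y ^ 2 / 2 + |y| ^ 3 * exp |y| := by
  have h := Complex.norm_exp_sub_sum_le_norm_mul_exp (y : ℂ) 3
  norm_num [Finset.sum_range_succ, Nat.factorial] at h
  have h' : ‖((Real.exp y - (1 + y + y ^ 2 / 2) : ℝ) : ℂ)‖ ≤ |y| ^ 3 * exp |y| := by
    push_cast; simpa [← Complex.ofReal_exp] using h
  rw [Complex.norm_real, Real.norm_eq_abs] at h'
  linarith [le_abs_self (Real.exp y - (1 + y + y ^ 2 / 2))]

lemma exp_mul_abs_le_exp_add_abs_pow_three_mul_exp {l x : ℝ} (hl : 0 ≤ l) :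
    exp (l * |x|) ≤ exp l + |x| ^ 3 * exp (l * |x|) := by
  rcases le_or_gt |x| 1 with hx | hx
  · have : exp (l * |x|) ≤ exp l := exp_le_exp.2 (by nlinarith [abs_nonneg x])
    have : 0 ≤ |x| ^ 3 * exp (l * |x|) := by positivity
    linarith
  · have : 1 ≤ |x| ^ 3 := one_le_pow₀ hx.le
    nlinarith [exp_pos l, exp_pos (l * |x|)]

section

variable {Ω : Type*} [MeasurableSpace Ω] {μ : Measure Ω}

lemma mgf_sum_le_exp_sq_mul {ι : Type*} {X : ι → Ω → ℝ} (hindep : iIndepFun X μ)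
    (hX : ∀ i, Measurable (X i)) (s : Finset ι) {t : ℝ} {v : ι → ℝ}
    (h : ∀ i ∈ s, mgf (X i) μ t ≤ exp (t ^ 2 * v i)) :
    mgf (fun ω => ∑ i ∈ s, X i ω) μ t ≤ exp (t ^ 2 * ∑ i ∈ s, v i) := by
  rw [← Finset.sum_fn, hindep.mgf_sum hX, Finset.mul_sum, exp_sum]
  exact Finset.prod_le_prod (fun i _ => mgf_nonneg) h

section FiniteMeasure

variable [IsFiniteMeasure μ]

lemma integrable_exp_mul_of_integrable_abs_pow_three_mul_exp {X : Ω → ℝ}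
    (hX : Measurable X) {l t : ℝ} (ht : |t| ≤ l)
    (h3 : Integrable (fun ω => |X ω| ^ 3 * exp (l * |X ω|)) μ) :
    Integrable (fun ω => exp (t * X ω)) μ := by
  refine ((integrable_const (exp l)).add h3).mono (hX.const_mul t).exp.aestronglyMeasurable
    (ae_of_all _ fun ω => ?_)
  have : 0 ≤ |X ω| ^ 3 * exp (l * |X ω|) := by positivity
  rw [norm_of_nonneg (exp_pos _).le, Pi.add_apply, norm_of_nonneg (by positivity)]
  calc exp (t * X ω) ≤ exp (l * |X ω|) :=
        exp_le_exp.2 ((le_abs_self _).trans (by rw [abs_mul]; gcongr))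
    _ ≤ _ := exp_mul_abs_le_exp_add_abs_pow_three_mul_exp ((abs_nonneg t).trans ht)

lemma integral_sq_sum_eq_sum_integral_sq {ι : Type*} {X : ι → Ω → ℝ} (hindep : iIndepFun X μ)
    (hX : ∀ i, MemLp (X i) 2 μ) (hmean : ∀ i, ∫ ω, X i ω ∂μ = 0) (s : Finset ι) :
    ∫ ω, (∑ i ∈ s, X i ω) ^ 2 ∂μ = ∑ i ∈ s, ∫ ω, X i ω ^ 2 ∂μ := by
  have hsum_mean : ∫ ω, ∑ i ∈ s, X i ω ∂μ = 0 := by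
    rw [integral_finsetSum _ fun i _ => (hX i).integrable one_le_two]
    simp [hmean]
  rw [← variance_of_integral_eq_zero
    (Finset.aemeasurable_fun_sum s fun i _ => (hX i).aemeasurable) hsum_mean, ← Finset.sum_fn,
    IndepFun.variance_sum (fun i _ => hX i) fun i _ j _ hij => hindep.indepFun hij]
  exact Finset.sum_congr rfl fun i _ => variance_of_integral_eq_zero (hX i).aemeasurable (hmean i)

section Tails

variable {X : Ω → ℝ} {a v : ℝ}

lemma measureReal_abs_ge_le_two_mul_exp_of_mgf_le
    (hint : ∀ s, |s| ≤ a → Integrable (fun ω => exp (s * X ω)) μ)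
    (hmgf : ∀ s, |s| ≤ a → mgf X μ s ≤ exp (s ^ 2 * v))
    {t x : ℝ} (ht : 0 ≤ t) (hta : t ≤ a) (htx : 2 * t * v ≤ x) :
    μ.real {ω | x ≤ |X ω|} ≤ 2 * exp (-(t * x / 2)) := by
  have hta' : |t| ≤ a := by rwa [abs_of_nonneg ht]
  have hta'' : |-t| ≤ a := by rwa [abs_neg]
  have hexp : exp (-t * x) * exp (t ^ 2 * v) ≤ exp (-(t * x / 2)) := by
    rw [← exp_add, exp_le_exp]; nlinarith
  have hupper : μ.real {ω | x ≤ X ω} ≤ exp (-(t * x / 2)) :=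
    calc μ.real {ω | x ≤ X ω} ≤ exp (-t * x) * mgf X μ t :=
          measure_ge_le_exp_mul_mgf x ht (hint t hta')
      _ ≤ exp (-t * x) * exp (t ^ 2 * v) := by gcongr; exact hmgf t hta'
      _ ≤ _ := hexp
  have hlower : μ.real {ω | X ω ≤ -x} ≤ exp (-(t * x / 2)) :=
    calc μ.real {ω | X ω ≤ -x} ≤ exp (-(-t) * -x) * mgf X μ (-t) :=
          measure_le_le_exp_mul_mgf (-x) (by linarith) (hint (-t) hta'')
      _ ≤ exp (-t * x) * exp (t ^ 2 * v) := by
          rw [neg_mul_neg, ← neg_sq t]; gcongr; exact hmgf (-t) hta''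
      _ ≤ _ := hexp
  have hsub : {ω | x ≤ |X ω|} ⊆ {ω | x ≤ X ω} ∪ {ω | X ω ≤ -x} := fun ω (hω : x ≤ |X ω|) => by
    rcases le_abs'.1 hω with h | h
    exacts [Or.inr h, Or.inl h]
  calc μ.real {ω | x ≤ |X ω|} ≤ μ.real {ω | x ≤ X ω} + μ.real {ω | X ω ≤ -x} :=
        (measureReal_mono hsub).trans (measureReal_union_le _ _)
    _ ≤ _ := by linarith

lemma measureReal_abs_ge_le_two_mul_exp_sq_div
    (hint : ∀ s, |s| ≤ a → Integrable (fun ω => exp (s * X ω)) μ)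
    (hmgf : ∀ s, |s| ≤ a → mgf X μ s ≤ exp (s ^ 2 * v))
    {c x : ℝ} (hc : 0 ≤ c) (hca : 4 * c ≤ a) (hc8 : 8 * c ≤ 1) (hx : 0 < x) (hxv : x ≤ v) :
    μ.real {ω | x ≤ |X ω|} ≤ 2 * exp (-(2 * c * (x ^ 2 / v))) := by
  have hv : 0 < v := hx.trans_le hxv
  have hxv' : x / v ≤ 1 := (div_le_one hv).2 hxv
  convert measureReal_abs_ge_le_two_mul_exp_of_mgf_le hint hmgf (t := 4 * c * (x / v))
    (by positivity) (by nlinarith [div_nonneg hx.le hv.le]) ?_ using 3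
  · field_simp; ring
  · field_simp; nlinarith

end Tails

lemma measureReal_le_sq_div_sqrt_truncation_le {Y : Ω → ℝ} {M v k C : ℝ} (hC : 0 ≤ C)
    (htail : ∀ x, 0 < x → x ≤ M → μ.real {ω | x ≤ |Y ω|} ≤ C * exp (-(k * (x ^ 2 / v))))
    {t : ℝ} (ht : 0 < t) :
    μ.real {ω | t ≤ ((if |Y ω| ≤ M then Y ω else 0) / √v) ^ 2} ≤ C * exp (-(k * t)) := by
  rcases le_or_gt v 0 with hv | hv
  · have hempty : {ω | t ≤ ((if |Y ω| ≤ M then Y ω else 0) / √v) ^ 2} = ∅ := by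
      ext ω; simp [Real.sqrt_eq_zero'.2 hv, ht]
    rw [hempty, measureReal_empty]; positivity
  set x := √(t * v)
  have hx : 0 < x := Real.sqrt_pos.2 (mul_pos ht hv)
  have hxt : x ^ 2 / v = t := by rw [Real.sq_sqrt (mul_pos ht hv).le]; field_simp
  have hsub : {ω | t ≤ ((if |Y ω| ≤ M then Y ω else 0) / √v) ^ 2} ⊆
      {ω | x ≤ |Y ω| ∧ |Y ω| ≤ M} := fun ω hω => by
    rw [Set.mem_ofPred_eq, div_pow, Real.sq_sqrt hv.le, le_div_iff₀ hv] at hω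
    have hxT := (Real.sqrt_le_sqrt hω).trans_eq (Real.sqrt_sq_eq_abs _)
    split_ifs at hxT with hYM
    · exact ⟨hxT, hYM⟩
    · rw [abs_zero] at hxT; linarith
  by_cases hxM : x ≤ M
  · calc _ ≤ μ.real {ω | x ≤ |Y ω|} := measureReal_mono (hsub.trans fun ω h => h.1)
      _ ≤ _ := hxt ▸ htail x hx hxM
  · have hempty : {ω | x ≤ |Y ω| ∧ |Y ω| ≤ M} = ∅ :=
      Set.eq_empty_of_forall_notMem fun ω h => hxM (h.1.trans h.2)
    calc _ ≤ μ.real {ω | x ≤ |Y ω| ∧ |Y ω| ≤ M} := measureReal_mono hsub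
      _ = 0 := by rw [hempty, measureReal_empty]
      _ ≤ _ := by positivity

end FiniteMeasure

variable [IsProbabilityMeasure μ]

lemma mgf_le_exp_sq_mul_of_sakhanenko {X : Ω → ℝ} (hX : Measurable X) {l t : ℝ}
    (ht : |t| ≤ l / 3) (hmean : ∫ ω, X ω ∂μ = 0) (h2 : Integrable (fun ω => X ω ^ 2) μ)
    (h3 : Integrable (fun ω => |X ω| ^ 3 * exp (l * |X ω|)) μ)
    (hsak : l * ∫ ω, |X ω| ^ 3 * exp (l * |X ω|) ∂μ ≤ ∫ ω, X ω ^ 2 ∂μ) :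
    mgf X μ t ≤ exp (t ^ 2 * ∫ ω, X ω ^ 2 ∂μ) := by
  set σ2 := ∫ ω, X ω ^ 2 ∂μ
  set I3 := ∫ ω, |X ω| ^ 3 * exp (l * |X ω|) ∂μ
  have hl : 0 ≤ l := by linarith [abs_nonneg t]
  have hX1 : Integrable X μ :=
    ((memLp_two_iff_integrable_sq hX.aestronglyMeasurable).2 h2).integrable one_le_two
  have hpointwise : ∀ ω, exp (t * X ω) ≤
      1 + t * X ω + t ^ 2 / 2 * X ω ^ 2 + |t| ^ 3 * (|X ω| ^ 3 * exp (l * |X ω|)) := by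
    intro ω
    calc exp (t * X ω) ≤ 1 + t * X ω + (t * X ω) ^ 2 / 2 + |t * X ω| ^ 3 * exp |t * X ω| :=
          exp_le_one_add_add_sq_div_two_add _
      _ = 1 + t * X ω + t ^ 2 / 2 * X ω ^ 2 + |t| ^ 3 * (|X ω| ^ 3 * exp (|t| * |X ω|)) := by
          rw [abs_mul]; ring
      _ ≤ _ := by gcongr; linarith
  have hlin : Integrable (fun ω => 1 + t * X ω) μ := (integrable_const 1).add (hX1.const_mul t)
  have hquad : Integrable (fun ω => 1 + t * X ω + t ^ 2 / 2 * X ω ^ 2) μ :=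
    hlin.add (h2.const_mul _)
  have hmajorant : ∫ ω, (1 + t * X ω + t ^ 2 / 2 * X ω ^ 2
      + |t| ^ 3 * (|X ω| ^ 3 * exp (l * |X ω|))) ∂μ = 1 + t ^ 2 / 2 * σ2 + |t| ^ 3 * I3 := by
    rw [integral_add hquad (h3.const_mul _), integral_add hlin (h2.const_mul _),
      integral_add (integrable_const 1) (hX1.const_mul t), integral_const_mul,
      integral_const_mul, integral_const_mul, hmean]
    simp [σ2, I3]
  have hcubic : |t| ^ 3 * I3 ≤ t ^ 2 / 3 * σ2 := by
    have hI3 : 0 ≤ I3 := integral_nonneg fun ω => by positivity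
    calc |t| ^ 3 * I3 = t ^ 2 * (|t| * I3) := by rw [← sq_abs t]; ring
      _ ≤ t ^ 2 * (l / 3 * I3) := by gcongr
      _ ≤ t ^ 2 / 3 * σ2 := by nlinarith [sq_nonneg t]
  have hσ2 : 0 ≤ σ2 := integral_nonneg fun ω => sq_nonneg _
  calc mgf X μ t ≤ 1 + t ^ 2 / 2 * σ2 + |t| ^ 3 * I3 := by
        rw [← hmajorant]
        exact integral_mono (integrable_exp_mul_of_integrable_abs_pow_three_mul_exp hX
          (by linarith [abs_nonneg t]) h3) (hquad.add (h3.const_mul _)) hpointwise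
    _ ≤ 1 + t ^ 2 * σ2 := by nlinarith [sq_nonneg t]
    _ ≤ exp (t ^ 2 * σ2) := by linarith [add_one_le_exp (t ^ 2 * σ2)]

lemma integral_exp_mul_le_one_add_of_measureReal_le {f : Ω → ℝ} (hf : Measurable f)
    (hf0 : 0 ≤ f) {c C : ℝ} (hc : 0 < c)
    (htail : ∀ t > 0, μ.real {ω | t ≤ f ω} ≤ C * exp (-(2 * c * t))) :
    ∫ ω, exp (c * f ω) ∂μ ≤ 1 + C := by
  have hC : 0 ≤ C := by
    have := (measureReal_nonneg).trans (htail 1 one_pos)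
    nlinarith [exp_pos (-(2 * c * 1))]
  have hprimitive : ∀ y, ∫ t in (0 : ℝ)..y, c * exp (c * t) = exp (c * y) - 1 := fun y => by
    simp [intervalIntegral.integral_comp_mul_left (fun t => exp t), hc.ne']
  have hlayer : ∫⁻ ω, ENNReal.ofReal (exp (c * f ω) - 1) ∂μ =
      ∫⁻ t in Set.Ioi 0, μ {ω | t ≤ f ω} * ENNReal.ofReal (c * exp (c * t)) := by
    simp_rw [← hprimitive]
    exact lintegral_comp_eq_lintegral_meas_le_mul μ (ae_of_all _ hf0) hf.aemeasurable
      (fun t _ => (by fun_prop : Continuous fun t => c * exp (c * t)).intervalIntegrable _ _)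
      (ae_of_all _ fun t => by positivity)
  have hdecay : ∫⁻ t in Set.Ioi 0, μ {ω | t ≤ f ω} * ENNReal.ofReal (c * exp (c * t)) ≤
      ENNReal.ofReal C := by
    calc _ ≤ ∫⁻ t in Set.Ioi 0, ENNReal.ofReal (C * c * exp (-c * t)) := by
          refine setLIntegral_mono (by fun_prop) fun t ht => ?_
          rw [← ofReal_measureReal, ← ENNReal.ofReal_mul measureReal_nonneg]
          apply ENNReal.ofReal_le_ofReal
          calc μ.real {ω | t ≤ f ω} * (c * exp (c * t))
              ≤ C * exp (-(2 * c * t)) * (c * exp (c * t)) := by gcongr; exact htail t ht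
            _ = C * c * exp (-c * t) := by rw [mul_mul_mul_comm, ← exp_add]; ring_nf
      _ = ENNReal.ofReal (∫ t in Set.Ioi 0, C * c * exp (-c * t)) :=
          (ofReal_integral_eq_lintegral_ofReal ((exp_neg_integrableOn_Ioi 0 hc).const_mul _)
            (ae_of_all _ fun t => by positivity)).symm
      _ = ENNReal.ofReal C := by
          rw [integral_const_mul, integral_exp_mul_Ioi (by linarith)]; field_simp; simp
  have hsplit : ∀ ω, ENNReal.ofReal (exp (c * f ω)) =
      1 + ENNReal.ofReal (exp (c * f ω) - 1) := fun ω => by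
    rw [← ENNReal.ofReal_one, ← ENNReal.ofReal_add zero_le_one
      (sub_nonneg.2 (one_le_exp (mul_nonneg hc.le (hf0 ω)))), add_sub_cancel]
  rw [integral_eq_lintegral_of_nonneg_ae (ae_of_all _ fun ω => (exp_pos _).le)
    (hf.const_mul c).exp.aestronglyMeasurable]
  refine ENNReal.toReal_le_of_le_ofReal (by linarith) ?_
  rw [lintegral_congr hsplit, lintegral_add_left measurable_const, lintegral_const, measure_univ,
    one_mul, ENNReal.ofReal_add zero_le_one hC, ENNReal.ofReal_one, hlayer]
  gcongr

end

theorem stmt5_general {Ω : Type*} [MeasurableSpace Ω] (μ : Measure Ω) [IsProbabilityMeasure μ]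
    (n : ℕ) (ξ : Fin n → Ω → ℝ) (hmeas : ∀ i, Measurable (ξ i))
    (hindep : iIndepFun ξ μ)
    (l : ℝ) (hl : 0 < l)
    (hmean : ∀ i, ∫ ω, ξ i ω ∂μ = 0)
    (hvar_int : ∀ i, Integrable (fun ω => (ξ i ω) ^ 2) μ)
    (hsak_int : ∀ i, Integrable (fun ω => |ξ i ω| ^ 3 * Real.exp (l * |ξ i ω|)) μ)
    (hsak : ∀ i, l * ∫ ω, |ξ i ω| ^ 3 * Real.exp (l * |ξ i ω|) ∂μ ≤ ∫ ω, (ξ i ω) ^ 2 ∂μ) :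
    let S : Ω → ℝ := fun ω => ∑ i, ξ i ω
    let B2 : ℝ := ∫ ω, (S ω) ^ 2 ∂μ
    let B : ℝ := Real.sqrt B2
    let Sstar : Ω → ℝ := fun ω => if |S ω| ≤ B2 then S ω else 0
    let c₁ : ℝ := (1 / 4) * min (l / 3) (1 / 2)
    ∫ ω, Real.exp (c₁ * (Sstar ω / B) ^ 2) ∂μ ≤ 1 + 2 / c₁ := by
  intro S B2 B Sstar c₁
  have hc₁ : 0 < c₁ := by positivity
  have hc₁_min : 4 * c₁ = min (l / 3) (1 / 2) := by simp only [c₁]; ring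
  have hmem i : MemLp (ξ i) 2 μ :=
    (memLp_two_iff_integrable_sq (hmeas i).aestronglyMeasurable).2 (hvar_int i)
  have hint s (hs : |s| ≤ l / 3) : Integrable (fun ω => exp (s * S ω)) μ := by
    simpa [S, Finset.sum_apply] using hindep.integrable_exp_mul_sum hmeas (s := Finset.univ)
      fun i _ => integrable_exp_mul_of_integrable_abs_pow_three_mul_exp (hmeas i)
        (by linarith [abs_nonneg s]) (hsak_int i)
  have hmgf s (hs : |s| ≤ l / 3) : mgf S μ s ≤ exp (s ^ 2 * B2) := by
    rw [show B2 = _ from integral_sq_sum_eq_sum_integral_sq hindep hmem hmean _]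
    exact mgf_sum_le_exp_sq_mul hindep hmeas _ fun i _ => mgf_le_exp_sq_mul_of_sakhanenko
      (hmeas i) hs (hmean i) (hvar_int i) (hsak_int i) (hsak i)
  have htail x (hx : 0 < x) (hxB : x ≤ B2) :
      μ.real {ω | x ≤ |S ω|} ≤ 2 * exp (-(2 * c₁ * (x ^ 2 / B2))) :=
    measureReal_abs_ge_le_two_mul_exp_sq_div hint hmgf hc₁.le
      (hc₁_min ▸ min_le_left _ _) (by linarith [min_le_right (l / 3) (1 / 2)]) hx hxB
  have hS : Measurable S := Finset.measurable_fun_sum _ fun i _ => hmeas i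
  have hSstar : Measurable Sstar :=
    Measurable.ite (measurableSet_le hS.abs measurable_const) hS measurable_const
  calc ∫ ω, exp (c₁ * (Sstar ω / B) ^ 2) ∂μ ≤ 1 + 2 :=
        integral_exp_mul_le_one_add_of_measureReal_le ((hSstar.div_const B).pow_const 2)
          (fun ω => sq_nonneg _) hc₁
          fun t ht => measureReal_le_sq_div_sqrt_truncation_le zero_le_two htail ht
    _ ≤ 1 + 2 / c₁ := by
        have : c₁ ≤ 1 := by linarith [min_le_right (l / 3) (1 / 2)]
        gcongr; rw [le_div_iff₀ hc₁]; linarith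

/-- For independent centered `ξ₁,…,ξₙ` satisfying Sakhanenko's condition, with
`Sₙ = Σ ξᵢ`, `Bₙ² = E Sₙ²` and `Sₙ* = Sₙ 1(|Sₙ| ≤ Bₙ²)`, one has
`E exp(c₁ (Sₙ*/Bₙ)²) ≤ 1 + 2/c₁` where `c₁ = (1/4) min(λ/3, 1/2)`. -/
theorem stmt5 {Ω : Type*} [MeasurableSpace Ω] (μ : Measure Ω) [IsProbabilityMeasure μ]
    (n : ℕ) (ξ : Fin n → Ω → ℝ) (hmeas : ∀ i, Measurable (ξ i))
    (hindep : iIndepFun ξ μ)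
    (l : ℝ) (hl : 0 < l)
    (hmean : ∀ i, ∫ ω, ξ i ω ∂μ = 0)
    (hvar_int : ∀ i, Integrable (fun ω => (ξ i ω) ^ 2) μ)
    (hvar_pos : ∀ i, 0 < ∫ ω, (ξ i ω) ^ 2 ∂μ)
    (hsak_int : ∀ i, Integrable (fun ω => |ξ i ω| ^ 3 * Real.exp (l * |ξ i ω|)) μ)
    (hsak : ∀ i, l * ∫ ω, |ξ i ω| ^ 3 * Real.exp (l * |ξ i ω|) ∂μ ≤ ∫ ω, (ξ i ω) ^ 2 ∂μ) :
    let S : Ω → ℝ := fun ω => ∑ i, ξ i ω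
    let B2 : ℝ := ∫ ω, (S ω) ^ 2 ∂μ
    let B : ℝ := Real.sqrt B2
    let Sstar : Ω → ℝ := fun ω => if |S ω| ≤ B2 then S ω else 0
    let c₁ : ℝ := (1 / 4) * min (l / 3) (1 / 2)
    ∫ ω, Real.exp (c₁ * (Sstar ω / B) ^ 2) ∂μ ≤ 1 + 2 / c₁ :=
  stmt5_general μ n ξ hmeas hindep l hl hmean hvar_int hsak_int hsak
end

section
/- Let ξ₁,...,ξₙ be independent real random variables with E ξᵢ = 0 satisfying Sakhanenko's condition λ E[|ξᵢ|³ exp(λ|ξᵢ|)] ≤ E ξᵢ² for all i, and let ρ₁,...,ρₙ be real numbers with |ρᵢ| ≤ λ/3. Then E exp(Σᵢ ρᵢ ξᵢ) ≤ exp(Σᵢ ρᵢ² E ξᵢ²). -/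
/-!
Taylor's formula gives `exp x ≤ 1 + x + x²/2 + |x|³ e^{|x|}`. Integrating it at `x = tX` with
`E X = 0` and `|t| ≤ λ/3`, Sakhanenko's condition turns the cubic term into at most
`t² E X² / 3`, so `E e^{tX} ≤ 1 + t² E X² ≤ exp (t² E X²)`. By independence the MGF of
`Σ ρᵢ ξᵢ` at `1` is the product of the MGFs of the `ξᵢ` at `ρᵢ`.
-/

open MeasureTheory ProbabilityTheory

theorem Real.exp_le_one_add_add_sq_div_two_add_abs_pow_three_mul_exp_abs (x : ℝ) :
    Real.exp x ≤ 1 + x + x ^ 2 / 2 + |x| ^ 3 * Real.exp |x| := by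
  have h := Complex.norm_exp_sub_sum_le_norm_mul_exp x 3
  norm_num [Finset.sum_range_succ, Nat.factorial, ← Complex.ofReal_exp] at h
  have h' : |Real.exp x - (1 + x + x ^ 2 / 2)| ≤ |x| ^ 3 * Real.exp |x| := by
    rw [← Real.norm_eq_abs, ← Complex.norm_real]
    exact_mod_cast h
  linarith [(abs_le.mp h').2]

theorem Real.exp_mul_le_quadratic_add_abs_pow_three_mul_exp_of_abs_le {t l : ℝ} (ht : |t| ≤ l)
    (x : ℝ) :
    Real.exp (t * x) ≤
      1 + t * x + t ^ 2 / 2 * x ^ 2 + |t| ^ 3 * (|x| ^ 3 * Real.exp (l * |x|)) :=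
  calc Real.exp (t * x)
      ≤ 1 + t * x + (t * x) ^ 2 / 2 + |t * x| ^ 3 * Real.exp |t * x| :=
        Real.exp_le_one_add_add_sq_div_two_add_abs_pow_three_mul_exp_abs _
    _ ≤ 1 + t * x + t ^ 2 / 2 * x ^ 2 + |t| ^ 3 * (|x| ^ 3 * Real.exp (l * |x|)) := by
        rw [abs_mul, mul_pow, mul_pow, mul_assoc, div_mul_eq_mul_div]
        gcongr

namespace ProbabilityTheory

variable {Ω : Type*} [MeasurableSpace Ω] {μ : Measure Ω} [IsProbabilityMeasure μ]
  {X : Ω → ℝ} {l t : ℝ}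

theorem mgf_le_exp_sq_mul_integral_sq_of_sakhanenko (hX : AEMeasurable X μ)
    (hmean : ∫ ω, X ω ∂μ = 0) (hsq : Integrable (fun ω => X ω ^ 2) μ)
    (hsak_int : Integrable (fun ω => |X ω| ^ 3 * Real.exp (l * |X ω|)) μ)
    (hsak : l * ∫ ω, |X ω| ^ 3 * Real.exp (l * |X ω|) ∂μ ≤ ∫ ω, X ω ^ 2 ∂μ)
    (ht : |t| ≤ l / 3) :
    mgf X μ t ≤ Real.exp (t ^ 2 * ∫ ω, X ω ^ 2 ∂μ) := by
  set σ2 := ∫ ω, X ω ^ 2 ∂μ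
  set S := ∫ ω, |X ω| ^ 3 * Real.exp (l * |X ω|) ∂μ
  have hX_int : Integrable X μ :=
    ((memLp_two_iff_integrable_sq hX.aestronglyMeasurable).2 hsq).integrable one_le_two
  have hlin : Integrable (fun ω => 1 + t * X ω) μ :=
    (integrable_const 1).add (hX_int.const_mul t)
  have hquad : Integrable (fun ω => 1 + t * X ω + t ^ 2 / 2 * X ω ^ 2) μ :=
    hlin.add (hsq.const_mul _)
  have hbound : Integrable (fun ω => 1 + t * X ω + t ^ 2 / 2 * X ω ^ 2
      + |t| ^ 3 * (|X ω| ^ 3 * Real.exp (l * |X ω|))) μ :=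
    hquad.add (hsak_int.const_mul _)
  have htl : |t| ≤ l := by linarith [abs_nonneg t]
  have hpt := Real.exp_mul_le_quadratic_add_abs_pow_three_mul_exp_of_abs_le htl
  have hmgf : mgf X μ t ≤ 1 + t ^ 2 / 2 * σ2 + |t| ^ 3 * S := by
    calc mgf X μ t ≤ ∫ ω, (1 + t * X ω + t ^ 2 / 2 * X ω ^ 2
          + |t| ^ 3 * (|X ω| ^ 3 * Real.exp (l * |X ω|))) ∂μ :=
          integral_mono_of_nonneg (ae_of_all _ fun ω => (Real.exp_pos _).le) hbound
            (ae_of_all _ fun ω => hpt (X ω))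
      _ = 1 + t ^ 2 / 2 * σ2 + |t| ^ 3 * S := by
          rw [integral_add hquad (hsak_int.const_mul _), integral_add hlin (hsq.const_mul _),
            integral_add (integrable_const 1) (hX_int.const_mul t), integral_const_mul,
            integral_const_mul, integral_const_mul, hmean]
          simp [σ2, S]
  have hS : 0 ≤ S := integral_nonneg fun ω => by positivity
  have hσ2 : 0 ≤ σ2 := integral_nonneg fun ω => sq_nonneg _
  have hcube : |t| ^ 3 * S ≤ t ^ 2 / 3 * σ2 :=
    calc |t| ^ 3 * S = t ^ 2 * |t| * S := by rw [pow_succ, sq_abs]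
      _ ≤ t ^ 2 * (l / 3) * S := by gcongr
      _ ≤ t ^ 2 / 3 * σ2 := by linarith [mul_le_mul_of_nonneg_left hsak (sq_nonneg t)]
  calc mgf X μ t ≤ 1 + t ^ 2 * σ2 := by linarith [mul_nonneg (sq_nonneg t) hσ2]
    _ ≤ Real.exp (t ^ 2 * σ2) := by linarith [Real.add_one_le_exp (t ^ 2 * σ2)]

end ProbabilityTheory

theorem stmt12_general {Ω : Type*} [MeasurableSpace Ω] (μ : Measure Ω) [IsProbabilityMeasure μ]
    (n : ℕ) (ξ : Fin n → Ω → ℝ) (hmeas : ∀ i, Measurable (ξ i))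
    (hindep : iIndepFun ξ μ)
    (l : ℝ)
    (hmean : ∀ i, ∫ ω, ξ i ω ∂μ = 0)
    (hvar_int : ∀ i, Integrable (fun ω => (ξ i ω) ^ 2) μ)
    (hsak_int : ∀ i, Integrable (fun ω => |ξ i ω| ^ 3 * Real.exp (l * |ξ i ω|)) μ)
    (hsak : ∀ i, l * ∫ ω, |ξ i ω| ^ 3 * Real.exp (l * |ξ i ω|) ∂μ ≤ ∫ ω, (ξ i ω) ^ 2 ∂μ)
    (ρ : Fin n → ℝ) (hρ : ∀ i, |ρ i| ≤ l / 3) :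
    ∫ ω, Real.exp (∑ i, ρ i * ξ i ω) ∂μ ≤
      Real.exp (∑ i, (ρ i) ^ 2 * ∫ ω, (ξ i ω) ^ 2 ∂μ) :=
  calc ∫ ω, Real.exp (∑ i, ρ i * ξ i ω) ∂μ
      = mgf (∑ i, fun ω => ρ i * ξ i ω) μ 1 := by simp [mgf, Finset.sum_apply]
    _ = ∏ i, mgf (fun ω => ρ i * ξ i ω) μ 1 :=
        (hindep.comp _ fun i => measurable_const_mul (ρ i)).mgf_sum
          (fun i => (hmeas i).const_mul (ρ i)) _
    _ ≤ ∏ i, Real.exp ((ρ i) ^ 2 * ∫ ω, (ξ i ω) ^ 2 ∂μ) := by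
        refine Finset.prod_le_prod (fun i _ => mgf_nonneg) fun i _ => ?_
        rw [mgf_const_mul, mul_one]
        exact mgf_le_exp_sq_mul_integral_sq_of_sakhanenko (hmeas i).aemeasurable (hmean i)
          (hvar_int i) (hsak_int i) (hsak i) (hρ i)
    _ = Real.exp (∑ i, (ρ i) ^ 2 * ∫ ω, (ξ i ω) ^ 2 ∂μ) := (Real.exp_sum _ _).symm

/-- Sub-Gaussian bound for weighted sums: for independent centered `ξᵢ` satisfying
Sakhanenko's condition and weights `|ρᵢ| ≤ λ/3`,
`E exp(Σ ρᵢ ξᵢ) ≤ exp(Σ ρᵢ² E ξᵢ²)`. -/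
theorem stmt12 {Ω : Type*} [MeasurableSpace Ω] (μ : Measure Ω) [IsProbabilityMeasure μ]
    (n : ℕ) (ξ : Fin n → Ω → ℝ) (hmeas : ∀ i, Measurable (ξ i))
    (hindep : iIndepFun ξ μ)
    (l : ℝ) (hl : 0 < l)
    (hmean : ∀ i, ∫ ω, ξ i ω ∂μ = 0)
    (hvar_int : ∀ i, Integrable (fun ω => (ξ i ω) ^ 2) μ)
    (hsak_int : ∀ i, Integrable (fun ω => |ξ i ω| ^ 3 * Real.exp (l * |ξ i ω|)) μ)
    (hsak : ∀ i, l * ∫ ω, |ξ i ω| ^ 3 * Real.exp (l * |ξ i ω|) ∂μ ≤ ∫ ω, (ξ i ω) ^ 2 ∂μ)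
    (ρ : Fin n → ℝ) (hρ : ∀ i, |ρ i| ≤ l / 3) :
    ∫ ω, Real.exp (∑ i, ρ i * ξ i ω) ∂μ ≤
      Real.exp (∑ i, (ρ i) ^ 2 * ∫ ω, (ξ i ω) ^ 2 ∂μ) :=
  stmt12_general μ n ξ hmeas hindep l hmean hvar_int hsak_int hsak ρ hρ
end
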